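/- For every integer n ≥ 3 and every integer k ≥ ⌈n/2⌉, the normalized coalescence manifold Ĉ_{n,k} has nonempty interior relative to the affine hyperplane H = { v ∈ ℝ^{n−1} : v₂ + ⋯ + v_n = 1 }, i.e., there is a point of Ĉ_{n,k} together with an open neighborhood of it in H contained in Ĉ_{n,k}. -/

import Mathlib

/-!
Writing `q_j = x_1 ⋯ x_j` and summing by parts, the `m`-th coordinate of `χ_{n,k}(x, y)` is
`(y_1 + ∑_{j<k} (y_{j+1} - y_j) q_j^a) / a` with `a = C(m,2)`. So `C_{n,k}` contains the image
of `(w, b, q) ↦ w γ(1) + ∑_j b_j γ(q_j)` near any point with `w > 0`, `b > 0` and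
`1 > q_1 > ⋯ > q_{k-1} > 0`, where `γ(t) = (t^a / a)_a` is a curve in `ℝ^{n-1}`. The differential
of this map has range spanned by `γ(1)`, `γ(q_j)` and `γ'(q_j)`. A linear functional killing all
of them is the coefficient vector of a polynomial with at most `n - 1 ≤ 2k - 1` monomials having
a root at `1` and double roots at the `q_j`, i.e. `2k - 1` positive roots counted with
multiplicity; by Descartes' rule of signs it vanishes. Hence the map is a submersion, `C_{n,k}`
is a neighbourhood of a point `c`, and rescaling by `∑ c_m` gives a relatively open subset of
`Ĉ_{n,k}`.
-/

open Finset

/-- The map `χ_{n,k}`: given breakpoint parameters `x` (used at indices `1, …, k-1`, with the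
convention `x_k = 0`) and population sizes `y` (used at indices `1, …, k`), its coordinate
indexed by `i : Fin (n-1)` (corresponding to `m = i + 2`, `m = 2, …, n`) is
`c_m = (1/C(m,2)) ∑_{j=1}^k y_j (∏_{l=1}^{j-1} x_l^{C(m,2)}) (1 - x_j^{C(m,2)})`. -/
noncomputable def chi (n k : ℕ) (x y : ℕ → ℝ) : Fin (n - 1) → ℝ :=
  fun i =>
    (1 / ((i.val + 2).choose 2 : ℝ)) *
      ∑ j ∈ Finset.Icc 1 k,
        y j * (∏ l ∈ Finset.Icc 1 (j - 1), x l ^ (i.val + 2).choose 2) *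
          (1 - (if j = k then (0 : ℝ) else x j) ^ (i.val + 2).choose 2)

/-- The coalescence manifold `C_{n,k} ⊆ ℝ^{n-1}`: the image of `χ_{n,k}` over parameters
`x ∈ (0,1)^{k-1}`, `y ∈ (0,∞)^k`. -/
def Coal (n k : ℕ) : Set (Fin (n - 1) → ℝ) :=
  { c | ∃ x y : ℕ → ℝ,
      (∀ j, 1 ≤ j → j ≤ k - 1 → 0 < x j ∧ x j < 1) ∧
      (∀ j, 1 ≤ j → j ≤ k → 0 < y j) ∧
      c = chi n k x y }

/-- The normalized coalescence manifold `Ĉ_{n,k} = {c/(c₂ + ⋯ + c_n) : c ∈ C_{n,k}}`. -/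
def CoalHat (n k : ℕ) : Set (Fin (n - 1) → ℝ) :=
  { v | ∃ c ∈ Coal n k, v = (∑ i, c i)⁻¹ • c }

open Filter Topology Polynomial

namespace Polynomial

theorem signVariations_lt_card_support {P : ℝ[X]} (hP : P ≠ 0) :
    P.signVariations < #P.support := by
  induction h : #P.support generalizing P with
  | zero => simp_all
  | succ c ih =>
    by_cases hE : P.eraseLead = 0
    · rw [← P.eraseLead_add_monomial_natDegree_leadingCoeff, hE, zero_add,
        signVariations_monomial]
      exact c.succ_pos
    · have := ih hE (by rw [card_support_eraseLead, h]; rfl)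
      have := signVariations_le_eraseLead_succ P
      omega

theorem sum_rootMultiplicity_lt_card_support {P : ℝ[X]} (hP : P ≠ 0) {S : Finset ℝ}
    (hS : ∀ x ∈ S, 0 < x) : ∑ x ∈ S, P.rootMultiplicity x < #P.support := by
  refine lt_of_le_of_lt ?_
    ((roots_countP_pos_le_signVariations P).trans_lt (signVariations_lt_card_support hP))
  set m := P.roots.filter (0 < ·)
  rw [Multiset.countP_eq_card_filter]
  calc ∑ x ∈ S, P.rootMultiplicity x = ∑ x ∈ S, m.count x :=
        sum_congr rfl fun x hx => by rw [Multiset.count_filter_of_pos (hS x hx), count_roots]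
    _ ≤ ∑ x ∈ S ∪ m.toFinset, m.count x := sum_le_sum_of_subset subset_union_left
    _ = Multiset.card m :=
        Multiset.sum_count_eq_card fun x hx => mem_union_right _ (Multiset.mem_toFinset.2 hx)

theorem eq_zero_of_isRoot_one_of_double_roots {P : ℝ[X]} {K : ℕ}
    (hsupp : #P.support ≤ 2 * K + 1) {r : Fin K → ℝ} (hr : Function.Injective r)
    (hr_pos : ∀ j, 0 < r j) (hr_ne : ∀ j, r j ≠ 1) (h1 : P.IsRoot 1)
    (hr_root : ∀ j, P.IsRoot (r j)) (hr_root' : ∀ j, P.derivative.IsRoot (r j)) : P = 0 := by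
  by_contra hP
  have h1_notMem : 1 ∉ univ.image r := by simpa using fun j => hr_ne j
  have hS : ∀ x ∈ insert 1 (univ.image r), 0 < x := by simpa using hr_pos
  refine (sum_rootMultiplicity_lt_card_support hP hS).not_ge (hsupp.trans ?_)
  rw [sum_insert h1_notMem, sum_image hr.injOn]
  have hmult1 : 0 < P.rootMultiplicity 1 := (rootMultiplicity_pos hP).2 h1
  have hmult : ∀ j, 2 ≤ P.rootMultiplicity (r j) := fun j =>
    (one_lt_rootMultiplicity_iff_isRoot hP).2 ⟨hr_root j, hr_root' j⟩
  calc 2 * K + 1 = ∑ _j : Fin K, 2 + 1 := by simp [mul_comm]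
    _ ≤ _ := by rw [add_comm]; gcongr with j; exacts [hmult1, hmult j]

end Polynomial

noncomputable def powCurve {N : ℕ} (a : Fin N → ℕ) (t : ℝ) : Fin N → ℝ :=
  fun i => t ^ a i / a i

theorem hasStrictDerivAt_powCurve {N : ℕ} {a : Fin N → ℕ} (ha : ∀ i, a i ≠ 0) (t : ℝ) :
    HasStrictDerivAt (powCurve a) (fun i => t ^ (a i - 1)) t := by
  refine hasStrictDerivAt_pi.2 fun i => ?_
  have := (hasStrictDerivAt_pow (a i) t).div_const (a i : ℝ)
  rwa [mul_div_cancel_left₀ _ (Nat.cast_ne_zero.2 (ha i))] at this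

theorem span_powCurve_eq_top {N K : ℕ} (hNK : N ≤ 2 * K + 1) {a : Fin N → ℕ}
    (ha : Function.Injective a) (ha_ne : ∀ i, a i ≠ 0) {r : Fin K → ℝ}
    (hr : Function.Injective r) (hr_pos : ∀ j, 0 < r j) (hr_ne : ∀ j, r j ≠ 1) :
    Submodule.span ℝ (insert (powCurve a 1) (Set.range (fun j => powCurve a (r j)) ∪
      Set.range (fun j i => r j ^ (a i - 1)))) = ⊤ := by
  by_contra h
  obtain ⟨f, hf, hle⟩ := Submodule.exists_le_ker_of_lt_top _ (lt_top_iff_ne_top.2 h)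
  simp only [Submodule.span_le, Set.insert_subset_iff, Set.union_subset_iff, Set.range_subset_iff,
    SetLike.mem_coe, LinearMap.mem_ker] at hle
  obtain ⟨h_one, h_val, h_der⟩ := hle
  set c : Fin N → ℝ := fun i => f (Pi.single i 1)
  have hf_apply : ∀ v, f v = ∑ i, v i * c i := fun v => by
    rw [LinearMap.pi_apply_eq_sum_univ f v]
    congr! with i
    simp [Pi.single_apply, eq_comm]
  have ha_ne' : ∀ i, (a i : ℝ) ≠ 0 := fun i => Nat.cast_ne_zero.2 (ha_ne i)
  set P : ℝ[X] := ∑ i, C (c i / a i) * X ^ a i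
  have hP_eval : ∀ t, P.eval t = f (powCurve a t) := fun t => by
    simp only [P, eval_finsetSum, hf_apply, powCurve]
    exact sum_congr rfl fun i _ => by simp; ring
  have hP'_eval : ∀ t, P.derivative.eval t = f (fun i => t ^ (a i - 1)) := fun t => by
    simp only [P, derivative_sum, derivative_C_mul_X_pow, eval_finsetSum, hf_apply]
    exact sum_congr rfl fun i _ => by simp [ha_ne']; ring
  have hP_coeff : ∀ i, P.coeff (a i) = c i / a i := fun i => by
    simp only [P, finsetSum_coeff, coeff_C_mul_X_pow]
    rw [sum_eq_single i (fun j _ hj => if_neg (ha.ne hj).symm) (absurd (mem_univ i)), if_pos rfl]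
  have hP_supp : #P.support ≤ 2 * K + 1 := by
    refine le_trans (card_le_card (t := univ.image a) fun m hm => ?_)
      ((card_image_le.trans_eq (card_fin N)).trans hNK)
    by_contra hm'
    simp only [mem_support_iff, P, finsetSum_coeff, coeff_C_mul_X_pow] at hm
    exact hm (sum_eq_zero fun i _ => if_neg fun h => hm' (by simp [h]))
  have hP : P = 0 := eq_zero_of_isRoot_one_of_double_roots hP_supp hr hr_pos hr_ne
    (by simp [IsRoot, hP_eval, h_one]) (fun j => by simp [IsRoot, hP_eval, h_val])
    (fun j => by simp [IsRoot, hP'_eval, h_der])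
  have hc : ∀ i, c i = 0 := fun i => by
    simpa [hP, eq_comm (a := (0 : ℝ)), ha_ne'] using hP_coeff i
  exact hf (LinearMap.ext fun v => by simp [hf_apply, hc])

noncomputable def powCurveSum {N K : ℕ} (a : Fin N → ℕ) (θ : ℝ × (Fin K → ℝ) × (Fin K → ℝ)) :
    Fin N → ℝ :=
  θ.1 • powCurve a 1 + ∑ j, θ.2.1 j • powCurve a (θ.2.2 j)

theorem exists_hasStrictFDerivAt_powCurveSum {N K : ℕ} {a : Fin N → ℕ} (ha : ∀ i, a i ≠ 0)
    (θ : ℝ × (Fin K → ℝ) × (Fin K → ℝ)) :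
    ∃ L : (ℝ × (Fin K → ℝ) × (Fin K → ℝ)) →L[ℝ] (Fin N → ℝ),
      HasStrictFDerivAt (powCurveSum a) L θ ∧ L (1, 0, 0) = powCurve a 1 ∧
      (∀ j, L (0, Pi.single j 1, 0) = powCurve a (θ.2.2 j)) ∧
      ∀ j, L (0, 0, Pi.single j 1) = θ.2.1 j • fun i => θ.2.2 j ^ (a i - 1) := by
  have hw := ((ContinuousLinearMap.fst ℝ ℝ ((Fin K → ℝ) × (Fin K → ℝ))).smulRight
    (powCurve a 1)).hasStrictFDerivAt (x := θ)
  have hsnd : HasStrictFDerivAt (fun θ : ℝ × (Fin K → ℝ) × (Fin K → ℝ) => θ.2) _ θ :=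
    hasStrictFDerivAt_snd (𝕜 := ℝ)
  have hterm : ∀ j : Fin K, HasStrictFDerivAt
      (fun θ : ℝ × (Fin K → ℝ) × (Fin K → ℝ) => θ.2.1 j • powCurve a (θ.2.2 j)) _ θ := fun j =>
    ((hasStrictFDerivAt_apply j θ.2.1).comp θ hsnd.fst).smul
      (((hasStrictDerivAt_powCurve ha (θ.2.2 j)).hasStrictFDerivAt).comp θ
        ((hasStrictFDerivAt_apply j θ.2.2).comp θ hsnd.snd))
  refine ⟨_, hw.add (HasStrictFDerivAt.fun_sum fun j _ => hterm j), ?_, fun j => ?_, fun j => ?_⟩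
  · simp
  · simp
  · simp [Pi.single_apply, ite_smul]

theorem map_nhds_powCurveSum {N K : ℕ} (hNK : N ≤ 2 * K + 1) {a : Fin N → ℕ}
    (ha : Function.Injective a) (ha_ne : ∀ i, a i ≠ 0) {w : ℝ} {b q : Fin K → ℝ}
    (hb : ∀ j, b j ≠ 0) (hq : Function.Injective q) (hq_pos : ∀ j, 0 < q j)
    (hq_ne : ∀ j, q j ≠ 1) :
    map (powCurveSum a) (𝓝 (w, b, q)) = 𝓝 (powCurveSum a (w, b, q)) := by
  obtain ⟨L, hL, hL_w, hL_b, hL_q⟩ := exists_hasStrictFDerivAt_powCurveSum ha_ne (w, b, q)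
  refine hL.map_nhds_eq_of_surj (eq_top_iff.2 ?_)
  rw [← span_powCurve_eq_top hNK ha ha_ne hq hq_pos hq_ne, Submodule.span_le]
  rintro _ (rfl | ⟨j, rfl⟩ | ⟨j, rfl⟩)
  · exact ⟨_, hL_w⟩
  · exact ⟨_, hL_b j⟩
  · refine ⟨(b j)⁻¹ • (0, 0, Pi.single j 1), ?_⟩
    simp only [ContinuousLinearMap.coe_coe, map_smul, hL_q j, inv_smul_smul₀ (hb j)]

def coalExp (N : ℕ) (i : Fin N) : ℕ := (i.val + 2).choose 2

theorem coalExp_strictMono (N : ℕ) : StrictMono (coalExp N) :=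
  (strictMono_nat_of_lt_succ (f := fun m => (m + 2).choose 2) fun m => by
    simp [Nat.choose_succ_succ' (m + 2) 1]).comp Fin.val_strictMono

theorem coalExp_ne_zero {N : ℕ} (i : Fin N) : coalExp N i ≠ 0 :=
  (Nat.choose_pos (by omega)).ne'

theorem chi_sum_eq_add_sum_range (x y : ℕ → ℝ) {a : ℕ} (ha : a ≠ 0) (K : ℕ) :
    ∑ j ∈ Icc 1 (K + 1), y j * (∏ l ∈ Icc 1 (j - 1), x l ^ a) *
        (1 - (if j = K + 1 then 0 else x j) ^ a) =
      y 1 + ∑ j ∈ range K, (y (j + 2) - y (j + 1)) * (∏ l ∈ Icc 1 (j + 1), x l) ^ a := by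
  set P : ℕ → ℝ := fun m => (∏ l ∈ Icc 1 m, x l) ^ a
  have hP : ∀ m, P (m + 1) = P m * x (m + 1) ^ a := fun m => by
    simp only [P, prod_Icc_succ_top (Nat.le_add_left 1 m), mul_pow]
  have habel : ∀ K, ∑ j ∈ Icc 1 (K + 1), y j * P (j - 1) * (1 - x j ^ a) + y (K + 1) * P (K + 1) =
      y 1 + ∑ j ∈ range K, (y (j + 2) - y (j + 1)) * P (j + 1) := fun K => by
    induction K with
    | zero => simp [hP, P]; ring
    | succ K ih =>
      rw [sum_Icc_succ_top (by omega), sum_range_succ, ← add_assoc, ← ih, hP (K + 1)]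
      simp only [Nat.add_sub_cancel]
      ring
  rw [← habel K, sum_Icc_succ_top (by omega), sum_Icc_succ_top (by omega), if_pos rfl,
    zero_pow ha, hP K]
  simp only [prod_pow, Nat.add_sub_cancel]
  rw [sum_congr rfl fun j hj => by rw [if_neg (by simp at hj; omega)]]
  ring

theorem chi_eq_powCurveSum {n K : ℕ} {x y : ℕ → ℝ} {w : ℝ} {b q : Fin K → ℝ} (hy₁ : y 1 = w)
    (hy : ∀ j : Fin K, y (j + 2) - y (j + 1) = b j)
    (hx : ∀ j : Fin K, ∏ l ∈ Icc 1 ((j : ℕ) + 1), x l = q j) :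
    chi n (K + 1) x y = powCurveSum (coalExp (n - 1)) (w, b, q) := by
  funext i
  have ha : ((i.val + 2).choose 2 : ℝ) ≠ 0 := Nat.cast_ne_zero.2 (coalExp_ne_zero i)
  rw [chi, chi_sum_eq_add_sum_range x y (a := (i.val + 2).choose 2) (coalExp_ne_zero i),
    ← Fin.sum_univ_eq_sum_range]
  simp only [powCurveSum, powCurve, coalExp, Pi.add_apply, Finset.sum_apply, Pi.smul_apply,
    smul_eq_mul, hy₁, hy, hx, mul_add, mul_sum]
  field_simp
  simp

theorem powCurveSum_mem_coal {n K : ℕ} {w : ℝ} {b q : Fin K → ℝ} (hw : 0 < w)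
    (hb : ∀ j, 0 ≤ b j) (hq : StrictAnti q) (hq_pos : ∀ j, 0 < q j) (hq_lt_one : ∀ j, q j < 1) :
    powCurveSum (coalExp (n - 1)) (w, b, q) ∈ Coal n (K + 1) := by
  set B : ℕ → ℝ := fun l => if h : l < K then b ⟨l, h⟩ else 0
  -- `Q m = q (m - 1)` with `Q 0 = 1`; the breakpoints `x l = Q l / Q (l - 1)` have `Q` as
  -- partial products.
  set Q : ℕ → ℝ := fun m => if h : 0 < m ∧ m - 1 < K then q ⟨m - 1, h.2⟩ else 1
  have hQ_pos : ∀ m, 0 < Q m := fun m => by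
    simp only [Q]; split_ifs; exacts [hq_pos _, one_pos]
  have hQ_succ : ∀ j : Fin K, Q (j + 1) = q j := fun j => by simp [Q]
  have hQ_lt : ∀ j : Fin K, Q (j + 1) < Q j := fun j => by
    rw [hQ_succ]
    rcases j with ⟨_ | i, hi⟩
    · simpa [Q] using hq_lt_one _
    · simpa [Q, show i < K by omega] using hq (Fin.mk_lt_mk.2 (Nat.lt_succ_self i))
  have hprod : ∀ m, ∏ l ∈ Icc 1 m, Q l / Q (l - 1) = Q m := fun m => by
    induction m with
    | zero => simp [Q]
    | succ m ih =>
      rw [prod_Icc_succ_top (by omega), ih, Nat.add_sub_cancel, mul_div_cancel₀ _ (hQ_pos m).ne']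
  refine ⟨fun l => Q l / Q (l - 1), fun m => w + ∑ l ∈ range (m - 1), B l, ?_, ?_, ?_⟩
  · intro l hl₁ hl₂
    obtain ⟨j, rfl⟩ : ∃ j : Fin K, l = j + 1 := ⟨⟨l - 1, by omega⟩, by simp; omega⟩
    exact ⟨div_pos (hQ_pos _) (hQ_pos _), (div_lt_one (hQ_pos _)).2 (by simpa using hQ_lt j)⟩
  · intro m _ _
    exact add_pos_of_pos_of_nonneg hw
      (sum_nonneg fun l _ => by simp only [B]; split_ifs <;> simp [hb])
  · refine (chi_eq_powCurveSum (by simp) (fun j => ?_) (fun j => by rw [hprod, hQ_succ])).symm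
    simp [sum_range_succ, B]

theorem eventually_strictAnti_nhds {ι α : Type*} [Finite ι] [Preorder ι] [TopologicalSpace α]
    [LinearOrder α] [OrderClosedTopology α] {f : ι → α} (hf : StrictAnti f) :
    ∀ᶠ g in 𝓝 f, StrictAnti g := by
  have : ∀ᶠ g in 𝓝 f, ∀ i j, i < j → g j < g i :=
    eventually_all.2 fun i => eventually_all.2 fun j => eventually_imp_distrib_left.2 fun hij =>
      (continuous_apply j).continuousAt.eventually_lt (continuous_apply i).continuousAt (hf hij)
  exact this.mono fun g hg i j => hg i j

theorem coal_mem_nhds_powCurveSum {n K : ℕ} (hnK : n - 1 ≤ 2 * K + 1) {w : ℝ} {b q : Fin K → ℝ}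
    (hw : 0 < w) (hb : ∀ j, 0 < b j) (hq : StrictAnti q) (hq_pos : ∀ j, 0 < q j)
    (hq_lt_one : ∀ j, q j < 1) :
    Coal n (K + 1) ∈ 𝓝 (powCurveSum (coalExp (n - 1)) (w, b, q)) := by
  rw [← map_nhds_powCurveSum hnK (coalExp_strictMono _).injective coalExp_ne_zero
    (fun j => (hb j).ne') hq.injective hq_pos (fun j => (hq_lt_one j).ne), Filter.mem_map]
  have hgood : ∀ᶠ θ : ℝ × (Fin K → ℝ) × (Fin K → ℝ) in 𝓝 (w, b, q), 0 < θ.1 ∧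
      (∀ j, 0 < θ.2.1 j) ∧ StrictAnti θ.2.2 ∧ ∀ j, θ.2.2 j ∈ Set.Ioo 0 1 := by
    rw [nhds_prod_eq, nhds_prod_eq]
    have hb' : ∀ᶠ b' : Fin K → ℝ in 𝓝 b, ∀ j, 0 < b' j := eventually_all.2 fun j =>
      (continuous_apply j).continuousAt.eventually (lt_mem_nhds (hb j))
    have hq' : ∀ᶠ q' : Fin K → ℝ in 𝓝 q, ∀ j, q' j ∈ Set.Ioo 0 1 := eventually_all.2 fun j =>
      (continuous_apply j).continuousAt.eventually_mem (Ioo_mem_nhds (hq_pos j) (hq_lt_one j))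
    exact (lt_mem_nhds hw).prod_mk (hb'.prod_mk ((eventually_strictAnti_nhds hq).and hq'))
  filter_upwards [hgood] with ⟨w', b', q'⟩ ⟨hw', hb', hq', hq'_mem⟩
  exact powCurveSum_mem_coal hw' (fun j => (hb' j).le) hq' (fun j => (hq'_mem j).1)
    fun j => (hq'_mem j).2

theorem powCurveSum_pos {N K : ℕ} {a : Fin N → ℕ} (ha : ∀ i, a i ≠ 0) {w : ℝ}
    {b q : Fin K → ℝ} (hw : 0 < w) (hb : ∀ j, 0 ≤ b j) (hq : ∀ j, 0 ≤ q j) (i : Fin N) :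
    0 < powCurveSum a (w, b, q) i := by
  simp only [powCurveSum, powCurve, Pi.add_apply, Finset.sum_apply, Pi.smul_apply, smul_eq_mul,
    one_pow]
  have : (0 : ℝ) < a i := Nat.cast_pos.2 (Nat.pos_of_ne_zero (ha i))
  exact add_pos_of_pos_of_nonneg (by positivity)
    (sum_nonneg fun j _ => mul_nonneg (hb j) (div_nonneg (pow_nonneg (hq j) _) this.le))

theorem exists_ball_subset_coalHat {n k : ℕ} {c : Fin (n - 1) → ℝ} (hc : Coal n k ∈ 𝓝 c)
    (hsum : ∑ i, c i ≠ 0) : ∃ p ∈ CoalHat n k, ∃ ε : ℝ, 0 < ε ∧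
      ∀ q : Fin (n - 1) → ℝ, (∑ i, q i) = 1 → dist q p < ε → q ∈ CoalHat n k := by
  obtain ⟨δ, hδ, hball⟩ := Metric.mem_nhds_iff.1 hc
  set s := ∑ i, c i
  refine ⟨s⁻¹ • c, ⟨c, mem_of_mem_nhds hc, rfl⟩, δ / |s|, by positivity, fun q hq hdist => ?_⟩
  have hsq : s • q ∈ Coal n k := hball <| by
    rw [Metric.mem_ball, ← smul_inv_smul₀ hsum c, dist_smul₀, Real.norm_eq_abs]
    rwa [lt_div_iff₀' (abs_pos.2 hsum)] at hdist
  refine ⟨s • q, hsq, ?_⟩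
  simp only [Pi.smul_apply, smul_eq_mul, ← mul_sum, hq, mul_one, inv_smul_smul₀ hsum]

theorem coalHat_full_dimensional (n k : ℕ) (hn : 3 ≤ n) (hk : (n + 1) / 2 ≤ k) :
    ∃ p ∈ CoalHat n k, ∃ ε : ℝ, 0 < ε ∧
      ∀ q : Fin (n - 1) → ℝ, (∑ i, q i) = 1 → dist q p < ε → q ∈ CoalHat n k := by
  obtain ⟨K, rfl⟩ : ∃ K, k = K + 1 := ⟨k - 1, by omega⟩
  set q : Fin K → ℝ := fun j => 2⁻¹ ^ (j.val + 1)
  have hq : StrictAnti q := fun i j hij =>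
    pow_lt_pow_right_of_lt_one₀ (by norm_num) (by norm_num) (Nat.succ_lt_succ hij)
  have hq_pos : ∀ j, 0 < q j := fun j => by positivity
  have hq_lt_one : ∀ j, q j < 1 := fun j =>
    pow_lt_one₀ (by norm_num) (by norm_num) j.val.succ_ne_zero
  refine exists_ball_subset_coalHat
    (coal_mem_nhds_powCurveSum (by omega) one_pos (fun _ => one_pos) hq hq_pos hq_lt_one) ?_
  exact (sum_pos (fun i _ => powCurveSum_pos coalExp_ne_zero one_pos (fun _ => zero_le_one)
    (fun j => (hq_pos j).le) i) ⟨⟨0, by omega⟩, mem_univ _⟩).ne'
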